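/- arXiv:2107.14192 — 2 statements merged into one kernel-verified Lean document; each statement's English description precedes it below -/
import Mathlib

section
/- Let C, K be real (or complex) n×n matrices, let Λ1, Λ2 be diagonal n×n matrices with Λ2 − Λ1 invertible, and set D := −(Λ1 + Λ2) and B := Λ1·Λ2. Given n×n matrices W1, W2, define T2 := W2 − W1 and T4 := W2·Λ2 − W1·Λ1. Then the compatibility conditions T4·D + T2·B = C·T4 + K·T2 and T4·B = −C·T2·B + K·(T4 + T2·D) hold if and only if W1·Λ1² + C·W1·Λ1 + K·W1 = 0 and W2·Λ2² + C·W2·Λ2 + K·W2 = 0. -/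
lemma diag_comm' {n : ℕ} {A B : Matrix (Fin n) (Fin n) ℂ}
    (hA : A.IsDiag) (hB : B.IsDiag) : A * B = B * A := by
  ext i j
  simp only [Matrix.mul_apply]
  rcases eq_or_ne i j with rfl | h
  · rw [Finset.sum_eq_single i (fun k _ hk => by rw [hA hk.symm, zero_mul])
      (by simp), Finset.sum_eq_single i (fun k _ hk => by rw [hB hk.symm, zero_mul])
      (by simp), mul_comm]
  · rw [Finset.sum_eq_zero, Finset.sum_eq_zero]
    · intro k _
      rcases eq_or_ne k i with rfl | hk
      · rw [hA h, mul_zero]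
      · rw [hB hk.symm, zero_mul]
    · intro k _
      rcases eq_or_ne k i with rfl | hk
      · rw [hB h, mul_zero]
      · rw [hA hk.symm, zero_mul]

/-- With `D := −(Λ1 + Λ2)`, `B := Λ1·Λ2`, `T2 := W2 − W1`,
`T4 := W2·Λ2 − W1·Λ1` (Λ1, Λ2 diagonal, Λ2 − Λ1 invertible), the compatibility
conditions hold iff `W1` and `W2` solve the quadratic matrix equation
`W·Λ² + C·W·Λ + K·W = 0` with `Λ = Λ1`, resp. `Λ = Λ2`. -/
theorem stmt4 {n : ℕ} (C K Λ1 Λ2 W1 W2 D B T2 T4 : Matrix (Fin n) (Fin n) ℂ)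
    (hΛ1 : Λ1.IsDiag) (hΛ2 : Λ2.IsDiag) (hinv : IsUnit (Λ2 - Λ1))
    (hD : D = -(Λ1 + Λ2)) (hB : B = Λ1 * Λ2)
    (hT2 : T2 = W2 - W1) (hT4 : T4 = W2 * Λ2 - W1 * Λ1) :
    (T4 * D + T2 * B = C * T4 + K * T2 ∧
      T4 * B = -(C * T2 * B) + K * (T4 + T2 * D)) ↔
    (W1 * Λ1 ^ 2 + C * W1 * Λ1 + K * W1 = 0 ∧
      W2 * Λ2 ^ 2 + C * W2 * Λ2 + K * W2 = 0) := by
  have comm : Λ1 * Λ2 = Λ2 * Λ1 := diag_comm' hΛ1 hΛ2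
  set E1 := W1 * Λ1 ^ 2 + C * W1 * Λ1 + K * W1 with hE1
  set E2 := W2 * Λ2 ^ 2 + C * W2 * Λ2 + K * W2 with hE2
  have key1 : T4 * D + T2 * B - (C * T4 + K * T2) = E1 - E2 := by
    subst hD hB hT2 hT4
    rw [hE1, hE2]
    noncomm_ring
    rw [comm]
    abel
  have key2 : T4 * B - (-(C * T2 * B) + K * (T4 + T2 * D)) = E2 * Λ1 - E1 * Λ2 := by
    subst hD hB hT2 hT4
    rw [hE1, hE2]
    noncomm_ring
    rw [comm]
    abel
  constructor
  · rintro ⟨h1, h2⟩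
    rw [h1, sub_self] at key1
    rw [h2, sub_self] at key2
    have e12 : E1 = E2 := by
      have := key1.symm
      rwa [sub_eq_zero] at this
    have hz : E2 * (Λ2 - Λ1) = 0 := by
      have this' := key2.symm
      rw [e12] at this'
      rw [mul_sub, ← neg_sub (E2 * Λ1) (E2 * Λ2), this', neg_zero]
    have h2z : E2 = 0 := by
      calc E2 = E2 * ((Λ2 - Λ1) * ↑hinv.unit⁻¹) := by
              rw [hinv.mul_val_inv, mul_one]
        _ = E2 * (Λ2 - Λ1) * ↑hinv.unit⁻¹ := by rw [mul_assoc]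
        _ = 0 := by rw [hz, zero_mul]
    exact ⟨e12.trans h2z, h2z⟩
  · rintro ⟨h1, h2⟩
    constructor
    · have := key1; rw [h1, h2, sub_self, sub_eq_zero] at this; exact this
    · have := key2; rw [h1, h2, zero_mul, zero_mul, sub_self, sub_eq_zero] at this; exact this
end

section
/- Let C, K, D, B, T1, T2, T3, T4 be real n×n matrices satisfying T3 = −T2·B, T1 = T4 + T2·D, T4·D = T3 + C·T4 + K·T2, and T4·B = C·T3 + K·T1. If p : ℝ → ℝⁿ is a twice differentiable curve satisfying p'' + D·p' + B·p = 0, then the curve q := T1·p + T2·p' satisfies q' = T3·p + T4·p' and q'' + C·q' + K·q = 0. -/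
/-!
Differentiating `q = T1·p + T2·p'` termwise gives `q' = T1·p' + T2·p''`. Both claimed identities
are then pointwise algebra: eliminating `p'' = -(D·p' + B·p)` turns them into the four
compatibility relations applied to `p` and `p'`.
-/

open Matrix

theorem HasDerivAt.matrix_mulVec {m n 𝕜 : Type*} [Fintype m] [Fintype n] [DecidableEq n]
    [NontriviallyNormedField 𝕜] [CompleteSpace 𝕜] (A : Matrix m n 𝕜) {f : 𝕜 → n → 𝕜}
    {f' : n → 𝕜} {t : 𝕜} (hf : HasDerivAt f f' t) :
    HasDerivAt (fun s => A *ᵥ f s) (A *ᵥ f') t :=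
  (LinearMap.toContinuousLinearMap (mulVecLin A)).hasFDerivAt.comp_hasDerivAt t hf

section Compatibility

variable {m n R : Type*} [Fintype n] [CommRing R] {C K : Matrix m m R} {D B : Matrix n n R}
  {T1 T2 T3 T4 : Matrix m n R} {x v a : n → R}

theorem velocity_transform_eq (hx : a + D *ᵥ v + B *ᵥ x = 0)
    (h1 : T3 = -(T2 * B)) (h2 : T1 = T4 + T2 * D) :
    T1 *ᵥ v + T2 *ᵥ a = T3 *ᵥ x + T4 *ᵥ v := by
  obtain rfl : a = -(D *ᵥ v + B *ᵥ x) := eq_neg_of_add_eq_zero_left (by rwa [add_assoc] at hx)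
  rw [h1, h2]
  simp only [add_mulVec, mulVec_add, mulVec_neg, neg_mulVec, mulVec_mulVec]
  abel

theorem transformed_equation_eq_zero [Fintype m] (hx : a + D *ᵥ v + B *ᵥ x = 0)
    (h3 : T4 * D = T3 + C * T4 + K * T2) (h4 : T4 * B = C * T3 + K * T1) :
    (T3 *ᵥ v + T4 *ᵥ a) + C *ᵥ (T3 *ᵥ x + T4 *ᵥ v) + K *ᵥ (T1 *ᵥ x + T2 *ᵥ v) = 0 := by
  obtain rfl : a = -(D *ᵥ v + B *ᵥ x) := eq_neg_of_add_eq_zero_left (by rwa [add_assoc] at hx)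
  simp only [mulVec_add, mulVec_neg, mulVec_mulVec]
  rw [h3, h4]
  simp only [add_mulVec]
  abel

end Compatibility

/-- Under the four compatibility conditions, the transformation
`q := T1·p + T2·p'` carries any solution of `p'' + D·p' + B·p = 0` to a curve with
`q' = T3·p + T4·p'` solving `q'' + C·q' + K·q = 0`. -/
theorem stmt7 {n : ℕ} (C K D B T1 T2 T3 T4 : Matrix (Fin n) (Fin n) ℝ)
    (h1 : T3 = -(T2 * B)) (h2 : T1 = T4 + T2 * D)
    (h3 : T4 * D = T3 + C * T4 + K * T2) (h4 : T4 * B = C * T3 + K * T1)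
    (p p' p'' : ℝ → Fin n → ℝ)
    (hp : ∀ t, HasDerivAt p (p' t) t)
    (hp' : ∀ t, HasDerivAt p' (p'' t) t)
    (hpeq : ∀ t, p'' t + D.mulVec (p' t) + B.mulVec (p t) = 0) :
    (∀ t, HasDerivAt (fun s => T1.mulVec (p s) + T2.mulVec (p' s))
        (T3.mulVec (p t) + T4.mulVec (p' t)) t) ∧
    (∀ t, HasDerivAt (fun s => T3.mulVec (p s) + T4.mulVec (p' s))
        (T3.mulVec (p' t) + T4.mulVec (p'' t)) t) ∧
    (∀ t, (T3.mulVec (p' t) + T4.mulVec (p'' t))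
        + C.mulVec (T3.mulVec (p t) + T4.mulVec (p' t))
        + K.mulVec (T1.mulVec (p t) + T2.mulVec (p' t)) = 0) := by
  refine ⟨fun t => ?_, fun t => ?_, fun t => transformed_equation_eq_zero (hpeq t) h3 h4⟩
  · rw [← velocity_transform_eq (hpeq t) h1 h2]
    exact ((hp t).matrix_mulVec T1).add ((hp' t).matrix_mulVec T2)
  · exact ((hp t).matrix_mulVec T3).add ((hp' t).matrix_mulVec T4)
end
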